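/- arXiv:1703.07077 — 2 statements merged into one kernel-verified Lean document; each statement's English description precedes it below -/
import Mathlib

section
/- Let G be a symmetric positive definite n×n real matrix, ν a unit vector in ℝⁿ, and P = I − ν νᵀ the orthogonal projection onto ν^⊥. Then det(G + ν νᵀ) = det(G) + det(P G P restricted to ν^⊥), where the last determinant is the (n−1)-dimensional determinant of the bilinear form x ↦ xᵀ G x restricted to the hyperplane ν^⊥. -/
open Matrix

/-- Let `G` be a symmetric positive definite `(n+1) × (n+1)` real matrix, `ν` a unit
vector, and `b : Fin n → ℝ^(n+1)` an orthonormal basis of the hyperplane `ν^⊥`.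
Then `det (G + ν νᵀ) = det G + det (bᵢ ⬝ᵥ G bⱼ)`, where the last determinant is the
`n`-dimensional determinant of the bilinear form induced by `G` on `ν^⊥`. -/
theorem stmt_3 (n : ℕ) (G : Matrix (Fin (n + 1)) (Fin (n + 1)) ℝ) (hG : G.PosDef)
    (ν : Fin (n + 1) → ℝ) (hν : ν ⬝ᵥ ν = 1)
    (b : Fin n → Fin (n + 1) → ℝ)
    (hborth : ∀ i, b i ⬝ᵥ ν = 0)
    (hbON : ∀ i j, b i ⬝ᵥ b j = if i = j then 1 else 0) :
    (G + Matrix.vecMulVec ν ν).det =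
      G.det + (Matrix.of fun i j => b i ⬝ᵥ G.mulVec (b j)).det := by
  classical
  set Q : Matrix (Fin (n + 1)) (Fin (n + 1)) ℝ := Matrix.of (Fin.cons ν b) with hQdef
  have hQQ : Q * Qᵀ = 1 := by
    ext i j
    refine Fin.cases ?_ ?_ i <;> [skip; intro i'] <;> refine Fin.cases ?_ ?_ j <;>
      try intro j'
    · simpa [hQdef, Matrix.mul_apply, Matrix.one_apply, dotProduct] using hν
    · have := hborth j'
      simp only [dotProduct] at this
      simp [hQdef, Matrix.mul_apply, Matrix.one_apply, dotProduct, mul_comm]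
      rw [← this]; exact Finset.sum_congr rfl fun k _ => mul_comm _ _
    · have := hborth i'
      simp only [dotProduct] at this
      simpa [hQdef, Matrix.mul_apply, Matrix.one_apply, dotProduct] using this
    · have := hbON i' j'
      simp only [dotProduct] at this
      simpa [hQdef, Matrix.mul_apply, Matrix.one_apply, dotProduct, Fin.succ_inj] using this
  have hdetQ : Q.det * Q.det = 1 := by
    have := congrArg Matrix.det hQQ
    simpa [Matrix.det_mul, Matrix.det_transpose] using this
  -- the first basis vector
  set e : Fin (n + 1) → ℝ := Pi.single 0 1 with hedef
  have hQν : Q.mulVec ν = e := by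
    funext i
    refine Fin.cases ?_ ?_ i
    · simpa [hQdef, Matrix.mulVec, hedef] using hν
    · intro i'
      simpa [hQdef, Matrix.mulVec, hedef, Fin.succ_ne_zero] using hborth i'
  set M : Matrix (Fin (n + 1)) (Fin (n + 1)) ℝ := Q * G * Qᵀ with hMdef
  have hconj : Q * (G + Matrix.vecMulVec ν ν) * Qᵀ = M + Matrix.vecMulVec e e := by
    have h1 : Q * Matrix.vecMulVec ν ν * Qᵀ = Matrix.vecMulVec e e := by
      ext i j
      have hi := congrFun hQν i
      have hj := congrFun hQν j
      simp only [Matrix.mulVec, dotProduct] at hi hj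
      simp only [Matrix.mul_apply, Matrix.vecMulVec_apply, Matrix.transpose_apply]
      rw [← hi, ← hj]
      simp [Finset.sum_mul, Finset.mul_sum, mul_assoc, mul_comm, mul_left_comm]
    rw [Matrix.mul_add, Matrix.add_mul, h1, hMdef]
  have hdetM : (G + Matrix.vecMulVec ν ν).det = (M + Matrix.vecMulVec e e).det := by
    have := congrArg Matrix.det hconj
    rw [Matrix.det_mul, Matrix.det_mul, Matrix.det_transpose] at this
    linear_combination this - (G + Matrix.vecMulVec ν ν).det * hdetQ
  have hdetG : M.det = G.det := by
    rw [hMdef, Matrix.det_mul, Matrix.det_mul, Matrix.det_transpose]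
    linear_combination G.det * hdetQ
  -- split off the rank-one perturbation
  have hsplit : M + Matrix.vecMulVec e e = M.updateRow 0 (M 0 + e) := by
    ext i j
    refine Fin.cases ?_ ?_ i
    · simp [hedef, Matrix.updateRow_apply, Matrix.vecMulVec_apply, Pi.single_apply]
    · intro i'
      simp [hedef, Matrix.updateRow_apply, Matrix.vecMulVec_apply, Fin.succ_ne_zero,
        Pi.single_apply]
  have hdet2 : (M + Matrix.vecMulVec e e).det = M.det + (M.updateRow 0 e).det := by
    rw [hsplit, Matrix.det_updateRow_add, Matrix.updateRow_eq_self]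
  have hcof : (M.updateRow 0 e).det = (M.submatrix Fin.succ Fin.succ).det := by
    rw [Matrix.det_succ_row_zero]
    rw [Finset.sum_eq_single (0 : Fin (n + 1))]
    · have hsm : (M.updateRow 0 (Pi.single 0 1)).submatrix Fin.succ Fin.succ =
          M.submatrix Fin.succ Fin.succ := by
        ext i j
        simp [Matrix.updateRow_apply, Fin.succ_ne_zero]
      simp [hedef, Fin.succAbove_zero, hsm]
    · intro j _ hj
      simp [hedef, Pi.single_apply, hj, Ne.symm hj]
    · simp
  have hsub : M.submatrix Fin.succ Fin.succ =
      Matrix.of fun i j => b i ⬝ᵥ G.mulVec (b j) := by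
    ext i j
    simp only [Matrix.submatrix_apply, hMdef, Matrix.mul_apply, Matrix.transpose_apply,
      hQdef, Matrix.of_apply, Fin.cons_succ, dotProduct, Matrix.mulVec]
    simp only [Finset.sum_mul, Finset.mul_sum]
    rw [Finset.sum_comm]
    exact Finset.sum_congr rfl fun x _ => Finset.sum_congr rfl fun y _ => by ring
  rw [hdetM, hdet2, hcof, hsub, hdetG]
end

section
/- Let f ∈ C¹([a,b]) be a polynomial of degree at most p with f(x_F) = 0 for some x_F ∈ [a,b], and write f(x) = Σ_{k=1}^p c_k (x − x_F)^k / k! with c_k = f^{(k)}(x_F). Then ∫_a^b (f'(x))² dx ≤ p Σ_{k=1}^p c_k² (b−a)^{2k−1} / (((k−1)!)² (2k−1)). -/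
/-!
Differentiating the Taylor expansion gives `f' x = ∑ₖ cₖ (x - x_F)^(k-1) / (k-1)!`, a sum of `p`
terms, so Cauchy–Schwarz bounds `(f' x)²` by `p ∑ₖ cₖ² (x - x_F)^(2(k-1)) / ((k-1)!)²`. Each monomial
integrates to `((b - x_F)^(2k-1) + (x_F - a)^(2k-1)) / (2k-1)`, which is at most `(b - a)^(2k-1) / (2k-1)`
since `x_F` splits `[a, b]` into two pieces.
-/

open Nat Finset intervalIntegral

theorem hasDerivAt_taylor_monomial (c x₀ x : ℝ) {k : ℕ} (hk : k ≠ 0) :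
    HasDerivAt (fun y => c * (y - x₀) ^ k / k !) (c * (x - x₀) ^ (k - 1) / (k - 1)!) x := by
  have hpow : HasDerivAt (fun y => (y - x₀) ^ k) (k * (x - x₀) ^ (k - 1)) x := by
    simpa using ((hasDerivAt_id x).sub_const x₀).fun_pow k
  refine ((hpow.const_mul c).div_const (k ! : ℝ)).congr_deriv ?_
  rw [← Nat.mul_factorial_pred hk]
  push_cast
  field_simp

theorem deriv_taylor_sum (p : ℕ) (c : ℕ → ℝ) (x₀ x : ℝ) :
    deriv (fun y => ∑ k ∈ Icc 1 p, c k * (y - x₀) ^ k / k !) x =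
      ∑ k ∈ Icc 1 p, c k * (x - x₀) ^ (k - 1) / (k - 1)! :=
  (HasDerivAt.fun_sum fun k hk =>
    hasDerivAt_taylor_monomial (c k) x₀ x (by have := (mem_Icc.mp hk).1; omega)).deriv

theorem integral_sub_pow_even_le {a b x₀ : ℝ} (hx₀ : x₀ ∈ Set.Icc a b) (n : ℕ) :
    ∫ x in a..b, (x - x₀) ^ (2 * n) ≤ (b - a) ^ (2 * n + 1) / (2 * n + 1) := by
  have hodd : Odd (2 * n + 1) := odd_two_mul_add_one n
  have hint : ∫ x in a..b, (x - x₀) ^ (2 * n) =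
      ((b - x₀) ^ (2 * n + 1) + (x₀ - a) ^ (2 * n + 1)) / (2 * n + 1) := by
    rw [integral_comp_sub_right (· ^ (2 * n)), integral_pow, ← neg_sub x₀ a, hodd.neg_pow]
    push_cast
    ring
  have hsplit : (b - x₀) ^ (2 * n + 1) + (x₀ - a) ^ (2 * n + 1) ≤ (b - a) ^ (2 * n + 1) := by
    simpa using pow_add_pow_le (sub_nonneg.mpr hx₀.2) (sub_nonneg.mpr hx₀.1) (succ_ne_zero (2 * n))
  rw [hint]
  gcongr

theorem integral_sq_taylor_deriv_monomial_le {a b x₀ : ℝ} (hx₀ : x₀ ∈ Set.Icc a b) (c : ℝ)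
    {k : ℕ} (hk : 1 ≤ k) :
    ∫ x in a..b, (c * (x - x₀) ^ (k - 1) / (k - 1)!) ^ 2 ≤
      c ^ 2 * (b - a) ^ (2 * k - 1) / ((k - 1)! ^ 2 * (2 * k - 1)) := by
  obtain ⟨n, rfl⟩ : ∃ n, k = n + 1 := ⟨k - 1, by omega⟩
  have hsq : ∀ x : ℝ, (c * (x - x₀) ^ n / n !) ^ 2 = c ^ 2 / n ! ^ 2 * (x - x₀) ^ (2 * n) := by
    intro x
    ring
  simp only [add_tsub_cancel_right, hsq, integral_const_mul]
  calc c ^ 2 / n ! ^ 2 * ∫ x in a..b, (x - x₀) ^ (2 * n)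
      ≤ c ^ 2 / n ! ^ 2 * ((b - a) ^ (2 * n + 1) / (2 * n + 1)) := by
        gcongr
        exact integral_sub_pow_even_le hx₀ n
    _ = c ^ 2 * (b - a) ^ (2 * (n + 1) - 1) / (n ! ^ 2 * (2 * ↑(n + 1) - 1)) := by
        rw [show 2 * (n + 1) - 1 = 2 * n + 1 by omega]
        push_cast
        rw [show 2 * ((n : ℝ) + 1) - 1 = 2 * n + 1 by ring]
        field_simp

/-- 1D core of the ghost-penalty inverse inequality: if
`f(x) = Σ_{k=1}^p c_k (x − x_F)^k / k!` on `[a,b]` (a polynomial of degree ≤ p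
vanishing at `x_F ∈ [a,b]`, with Taylor coefficients `c_k = f⁽ᵏ⁾(x_F)`), then
`∫_a^b (f'(x))² dx ≤ p Σ_{k=1}^p c_k² (b−a)^{2k−1} / (((k−1)!)² (2k−1))`. -/
theorem stmt_11 (p : ℕ) (a b xF : ℝ) (hab : a ≤ b) (hxF : xF ∈ Set.Icc a b)
    (c : ℕ → ℝ) (f : ℝ → ℝ)
    (hf : ∀ x, f x = ∑ k ∈ Finset.Icc 1 p, c k * (x - xF) ^ k / (Nat.factorial k)) :
    ∫ x in a..b, (deriv f x) ^ 2 ≤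
      (p : ℝ) * ∑ k ∈ Finset.Icc 1 p,
        (c k) ^ 2 * (b - a) ^ (2 * k - 1) /
          (((Nat.factorial (k - 1) : ℝ)) ^ 2 * (2 * (k : ℝ) - 1)) := by
  set g : ℕ → ℝ → ℝ := fun k x => c k * (x - xF) ^ (k - 1) / (k - 1)!
  have hf' : ∀ x, deriv f x = ∑ k ∈ Icc 1 p, g k x := by
    rw [funext hf]
    exact deriv_taylor_sum p c xF
  have hg : ∀ k, Continuous (g k) := fun k => by fun_prop
  have hcauchySchwarz : ∀ x, (deriv f x) ^ 2 ≤ p * ∑ k ∈ Icc 1 p, g k x ^ 2 := fun x => by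
    simpa [hf'] using sq_sum_le_card_mul_sum_sq (s := Icc 1 p) (f := fun k => g k x)
  calc ∫ x in a..b, (deriv f x) ^ 2
      ≤ ∫ x in a..b, p * ∑ k ∈ Icc 1 p, g k x ^ 2 := by
        refine integral_mono_on hab ?_ ?_ fun x _ => hcauchySchwarz x
        · simp only [hf']
          exact (continuous_finsetSum _ fun k _ => hg k).pow 2 |>.intervalIntegrable a b
        · exact (continuous_const.mul <| continuous_finsetSum _ fun k _ => (hg k).pow 2)
            |>.intervalIntegrable a b
    _ = p * ∑ k ∈ Icc 1 p, ∫ x in a..b, g k x ^ 2 := by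
        rw [integral_const_mul, integral_finsetSum]
        exact fun k _ => ((hg k).pow 2).intervalIntegrable a b
    _ ≤ _ := by
        gcongr with k hk
        exact integral_sq_taylor_deriv_monomial_le hxF (c k) (mem_Icc.mp hk).1
end
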